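/- arXiv:2307.16051 — 4 statements merged into one kernel-verified Lean document; each statement's English description precedes it below -/
import Mathlib

section
/- Assume: F'(x_c) and F'(x*) are invertible with ‖F'(x_c)‖ ≤ 2‖F'(x*)‖ and ‖F'(x_c)⁻¹‖ ≤ 2‖F'(x*)⁻¹‖; J satisfies ‖F'(x_c) − J‖ ≤ u_s‖F'(x_c)‖ with 4 u_s κ(F'(x*)) < 1. Set P* = 4κ(F'(x*))/(1 − 4 u_s κ(F'(x*))). If u_s P* < 1/2, η_J < 1 − 2 u_s P*, and s satisfies ‖J s + F(x_c)‖ ≤ η_J‖F(x_c)‖, then ‖F'(x_c) s + F(x_c)‖ ≤ η ‖F(x_c)‖ with η = η_J + (1 + η_J) u_s P* < 1. -/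
abbrev En (N : ℕ) := EuclideanSpace ℝ (Fin N)

set_option maxHeartbeats 1000000 in
theorem stmt5 {N : ℕ} (Fc Fc' Fs Fs' J : En N →L[ℝ] En N)
    (Fval s : En N) (us ηJ : ℝ)
    (hFc1 : Fc.comp Fc' = ContinuousLinearMap.id ℝ (En N))
    (hFc2 : Fc'.comp Fc = ContinuousLinearMap.id ℝ (En N))
    (hFs1 : Fs.comp Fs' = ContinuousLinearMap.id ℝ (En N))
    (hFs2 : Fs'.comp Fs = ContinuousLinearMap.id ℝ (En N))
    (hus : 0 ≤ us) (hηJ : 0 ≤ ηJ)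
    (hnorm : ‖Fc‖ ≤ 2 * ‖Fs‖)
    (hinv : ‖Fc'‖ ≤ 2 * ‖Fs'‖)
    (hJ : ‖Fc - J‖ ≤ us * ‖Fc‖)
    (hcond : 4 * us * (‖Fs‖ * ‖Fs'‖) < 1)
    (hP : us * (4 * (‖Fs‖ * ‖Fs'‖) / (1 - 4 * us * (‖Fs‖ * ‖Fs'‖))) < 1 / 2)
    (hηJlt : ηJ < 1 - 2 * us * (4 * (‖Fs‖ * ‖Fs'‖) / (1 - 4 * us * (‖Fs‖ * ‖Fs'‖))))
    (hs : ‖J s + Fval‖ ≤ ηJ * ‖Fval‖) :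
    ‖Fc s + Fval‖ ≤
      (ηJ + (1 + ηJ) * us *
        (4 * (‖Fs‖ * ‖Fs'‖) / (1 - 4 * us * (‖Fs‖ * ‖Fs'‖)))) * ‖Fval‖ ∧
    ηJ + (1 + ηJ) * us *
        (4 * (‖Fs‖ * ‖Fs'‖) / (1 - 4 * us * (‖Fs‖ * ‖Fs'‖))) < 1 := by
  set S : ℝ := ‖Fs‖ * ‖Fs'‖ with hS
  have hS0 : 0 ≤ S := mul_nonneg (norm_nonneg _) (norm_nonneg _)
  have hd : 0 < 1 - 4 * us * S := by linarith
  have hP0 : 0 ≤ 4 * S / (1 - 4 * us * S) := by positivity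
  set P : ℝ := 4 * S / (1 - 4 * us * S) with hPdef
  have ha0 : 0 ≤ us * P := mul_nonneg hus hP0
  -- second part
  have hlt : ηJ + (1 + ηJ) * us * P < 1 := by
    nlinarith [mul_nonneg ha0 ha0, mul_le_mul_of_nonneg_right hηJlt.le ha0]
  refine ⟨?_, hlt⟩
  -- norms
  have hf0 : 0 ≤ ‖Fval‖ := norm_nonneg _
  have hFc0 : 0 ≤ ‖Fc‖ := norm_nonneg _
  have hFc'0 : 0 ≤ ‖Fc'‖ := norm_nonneg _
  have hs0 : 0 ≤ ‖s‖ := norm_nonneg _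
  -- κ = ‖Fc‖‖Fc'‖ ≤ 4S
  have hκ : ‖Fc‖ * ‖Fc'‖ ≤ 4 * S :=
    calc ‖Fc‖ * ‖Fc'‖ ≤ (2 * ‖Fs‖) * (2 * ‖Fs'‖) :=
          mul_le_mul hnorm hinv hFc'0 (by positivity)
      _ = 4 * S := by ring
  -- ‖J s‖ ≤ (1+ηJ)‖Fval‖
  have hJs : ‖J s‖ ≤ (1 + ηJ) * ‖Fval‖ := by
    have : ‖J s‖ ≤ ‖J s + Fval‖ + ‖Fval‖ := by
      calc ‖J s‖ = ‖(J s + Fval) + (-Fval)‖ := by congr 1; abel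
        _ ≤ ‖J s + Fval‖ + ‖-Fval‖ := norm_add_le _ _
        _ = ‖J s + Fval‖ + ‖Fval‖ := by rw [norm_neg]
    linarith
  -- ‖Fc s‖ ≤ ‖J s‖ + us‖Fc‖‖s‖
  have hdiff : ‖Fc s - J s‖ ≤ us * ‖Fc‖ * ‖s‖ := by
    have h1 : ‖(Fc - J) s‖ ≤ ‖Fc - J‖ * ‖s‖ := (Fc - J).le_opNorm s
    have h2 : (Fc - J) s = Fc s - J s := rfl
    calc ‖Fc s - J s‖ = ‖(Fc - J) s‖ := by rw [h2]
      _ ≤ ‖Fc - J‖ * ‖s‖ := h1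
      _ ≤ us * ‖Fc‖ * ‖s‖ := by nlinarith
  have hFcs : ‖Fc s‖ ≤ ‖J s‖ + us * ‖Fc‖ * ‖s‖ := by
    calc ‖Fc s‖ = ‖J s + (Fc s - J s)‖ := by congr 1; abel
      _ ≤ ‖J s‖ + ‖Fc s - J s‖ := norm_add_le _ _
      _ ≤ ‖J s‖ + us * ‖Fc‖ * ‖s‖ := by linarith
  -- ‖s‖ ≤ ‖Fc'‖ ‖Fc s‖
  have hsid : Fc' (Fc s) = s := by
    have := congrArg (fun T => T s) hFc2
    simpa using this
  have hsb : ‖s‖ ≤ ‖Fc'‖ * ‖Fc s‖ := by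
    calc ‖s‖ = ‖Fc' (Fc s)‖ := by rw [hsid]
      _ ≤ ‖Fc'‖ * ‖Fc s‖ := Fc'.le_opNorm _
  -- combine: ‖s‖(1 - us κ) ≤ ‖Fc'‖(1+ηJ)f
  have hkey : ‖s‖ * (1 - us * (‖Fc‖ * ‖Fc'‖)) ≤ ‖Fc'‖ * ((1 + ηJ) * ‖Fval‖) := by
    nlinarith [mul_le_mul_of_nonneg_left hFcs hFc'0]
  -- hence us‖Fc‖‖s‖ ≤ (1+ηJ) us P f  (after clearing denominator)
  have hc0 : 0 ≤ us * ‖Fc‖ * ‖s‖ := mul_nonneg (mul_nonneg hus hFc0) hs0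
  have hmain : us * ‖Fc‖ * ‖s‖ * (1 - 4 * us * S) ≤ 4 * S * (us * (1 + ηJ) * ‖Fval‖) := by
    calc us * ‖Fc‖ * ‖s‖ * (1 - 4 * us * S)
        ≤ us * ‖Fc‖ * ‖s‖ * (1 - us * (‖Fc‖ * ‖Fc'‖)) := by
          apply mul_le_mul_of_nonneg_left _ hc0
          nlinarith
      _ = us * ‖Fc‖ * (‖s‖ * (1 - us * (‖Fc‖ * ‖Fc'‖))) := by ring
      _ ≤ us * ‖Fc‖ * (‖Fc'‖ * ((1 + ηJ) * ‖Fval‖)) :=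
          mul_le_mul_of_nonneg_left hkey (mul_nonneg hus hFc0)
      _ = (‖Fc‖ * ‖Fc'‖) * (us * ((1 + ηJ) * ‖Fval‖)) := by ring
      _ ≤ 4 * S * (us * ((1 + ηJ) * ‖Fval‖)) := by
          apply mul_le_mul_of_nonneg_right hκ
          have : (0:ℝ) ≤ 1 + ηJ := by linarith
          positivity
      _ = 4 * S * (us * (1 + ηJ) * ‖Fval‖) := by ring
  have hterm : us * ‖Fc‖ * ‖s‖ ≤ (1 + ηJ) * us * P * ‖Fval‖ := by
    rw [hPdef]
    rw [show (1 + ηJ) * us * (4 * S / (1 - 4 * us * S)) * ‖Fval‖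
        = 4 * S * (us * (1 + ηJ) * ‖Fval‖) / (1 - 4 * us * S) by ring]
    rw [le_div_iff₀ hd]
    exact hmain
  -- final assembly
  calc ‖Fc s + Fval‖ = ‖(J s + Fval) + (Fc s - J s)‖ := by congr 1; abel
    _ ≤ ‖J s + Fval‖ + ‖Fc s - J s‖ := norm_add_le _ _
    _ ≤ ηJ * ‖Fval‖ + us * ‖Fc‖ * ‖s‖ := by linarith
    _ ≤ ηJ * ‖Fval‖ + (1 + ηJ) * us * P * ‖Fval‖ := by linarith
    _ = (ηJ + (1 + ηJ) * us * P) * ‖Fval‖ := by ring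
end

section
/- Suppose the error recursion ‖e_{k+1}‖ ≤ C(‖e_k‖² + ε_J ‖e_k‖) holds for all k, where C > 0 and ε_J ≥ 0 satisfy C‖e₀‖ + Cε_J < 1. Then ‖e_k‖ → 0 as k → ∞, and the convergence is q-linear with factor C‖e₀‖ + Cε_J. -/
theorem stmt12 {N : ℕ} (e : ℕ → En N) (C εJ : ℝ)
    (hC : 0 < C) (hεJ : 0 ≤ εJ)
    (hrec : ∀ k, ‖e (k + 1)‖ ≤ C * (‖e k‖ ^ 2 + εJ * ‖e k‖))
    (hsmall : C * ‖e 0‖ + C * εJ < 1) :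
    Filter.Tendsto (fun k => ‖e k‖) Filter.atTop (nhds 0) ∧
    ∀ k, ‖e (k + 1)‖ ≤ (C * ‖e 0‖ + C * εJ) * ‖e k‖ := by
  set q : ℝ := C * ‖e 0‖ + C * εJ with hq
  have hq0 : 0 ≤ q := by positivity
  have hbd : ∀ k, ‖e k‖ ≤ ‖e 0‖ := by
    intro k
    induction k with
    | zero => exact le_refl _
    | succ n ih =>
      calc ‖e (n + 1)‖ ≤ C * (‖e n‖ ^ 2 + εJ * ‖e n‖) := hrec n
        _ = (C * ‖e n‖ + C * εJ) * ‖e n‖ := by ring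
        _ ≤ q * ‖e n‖ := by
            apply mul_le_mul_of_nonneg_right _ (norm_nonneg _)
            have := mul_le_mul_of_nonneg_left ih hC.le
            linarith
        _ ≤ 1 * ‖e 0‖ := by
            apply mul_le_mul hsmall.le ih (norm_nonneg _) zero_le_one
        _ = ‖e 0‖ := one_mul _
  have hstep : ∀ k, ‖e (k + 1)‖ ≤ q * ‖e k‖ := by
    intro k
    calc ‖e (k + 1)‖ ≤ C * (‖e k‖ ^ 2 + εJ * ‖e k‖) := hrec k
      _ = (C * ‖e k‖ + C * εJ) * ‖e k‖ := by ring
      _ ≤ q * ‖e k‖ := by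
          apply mul_le_mul_of_nonneg_right _ (norm_nonneg _)
          have := mul_le_mul_of_nonneg_left (hbd k) hC.le
          linarith
  refine ⟨?_, hstep⟩
  have hgeom : ∀ k, ‖e k‖ ≤ q ^ k * ‖e 0‖ := by
    intro k
    induction k with
    | zero => simp
    | succ n ih =>
      calc ‖e (n + 1)‖ ≤ q * ‖e n‖ := hstep n
        _ ≤ q * (q ^ n * ‖e 0‖) := mul_le_mul_of_nonneg_left ih hq0
        _ = q ^ (n + 1) * ‖e 0‖ := by ring
  have htends : Filter.Tendsto (fun k => q ^ k * ‖e 0‖) Filter.atTop (nhds 0) := by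
    have := tendsto_pow_atTop_nhds_zero_of_lt_one hq0 (by linarith : q < 1)
    simpa using this.mul_const ‖e 0‖
  exact squeeze_zero (fun k => norm_nonneg _) hgeom htends
end

section
/- Let F: ℝ^N → ℝ^N be differentiable at x* with F(x*) = 0 and F' Lipschitz with constant γ on a ball around x*. For x_c in that ball and any s ∈ ℝ^N with ‖F'(x_c)s + F(x_c)‖ ≤ η‖F(x_c)‖, the point x₊ = x_c + s satisfies ‖x₊ − x*‖ ≤ K(‖x_c − x*‖² + η‖x_c − x*‖) for a constant K depending only on γ, ‖F'(x*)‖, and ‖F'(x*)⁻¹‖, provided ‖x_c − x*‖ ≤ 1/(2γ‖F'(x*)⁻¹‖). -/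
set_option maxHeartbeats 1000000 in
theorem stmt15 {N : ℕ} (F : En N → En N) (F' : En N → (En N →L[ℝ] En N))
    (xs : En N) (A' : En N →L[ℝ] En N) (γ ρ : ℝ)
    (hγ : 0 < γ)
    (hdiff : ∀ x ∈ Metric.closedBall xs ρ, HasFDerivAt F (F' x) x)
    (hroot : F xs = 0)
    (hA1 : (F' xs).comp A' = ContinuousLinearMap.id ℝ (En N))
    (hA2 : A'.comp (F' xs) = ContinuousLinearMap.id ℝ (En N))
    (hlip : ∀ x ∈ Metric.closedBall xs ρ, ∀ y ∈ Metric.closedBall xs ρ,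
      ‖F' x - F' y‖ ≤ γ * ‖x - y‖) :
    ∃ K : ℝ, 0 < K ∧
      ∀ xc ∈ Metric.closedBall xs ρ, ∀ η : ℝ, 0 ≤ η → ∀ s : En N,
        ‖xc - xs‖ ≤ 1 / (2 * γ * ‖A'‖) →
        ‖F' xc s + F xc‖ ≤ η * ‖F xc‖ →
        ‖(xc + s) - xs‖ ≤ K * (‖xc - xs‖ ^ 2 + η * ‖xc - xs‖) := by
  refine ⟨2 * γ * ‖A'‖ + 2 * ‖A'‖ * ‖F' xs‖ + 2, by positivity, ?_⟩
  intro xc hxc η hη s hsmall hres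
  have hρ : 0 ≤ ρ := le_trans dist_nonneg (Metric.mem_closedBall.mp hxc)
  have hxs : xs ∈ Metric.closedBall xs ρ := Metric.mem_closedBall_self hρ
  have hid : ∀ v : En N, A' ((F' xs) v) = v := by
    intro v
    have := ContinuousLinearMap.ext_iff.mp hA2 v
    simpa using this
  set e : En N := xc - xs with he
  have hn : (0:ℝ) ≤ ‖e‖ := norm_nonneg _
  -- Taylor-type estimate
  have hseg : segment ℝ xs xc ⊆ Metric.closedBall xs ρ :=
    (convex_closedBall xs ρ).segment_subset hxs hxc
  have key : ∀ x ∈ segment ℝ xs xc, HasFDerivWithinAt (fun y => F y - F' xc y)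
      (F' x - F' xc) (segment ℝ xs xc) x := fun x hx =>
    ((hdiff x (hseg hx)).sub ((F' xc).hasFDerivAt)).hasFDerivWithinAt
  have hbound : ∀ x ∈ segment ℝ xs xc, ‖F' x - F' xc‖ ≤ γ * ‖e‖ := by
    intro x hx
    refine (hlip x (hseg hx) xc hxc).trans (mul_le_mul_of_nonneg_left ?_ hγ.le)
    obtain ⟨a, b, ha, hb, hab, rfl⟩ := hx
    have hx' : a • xs + b • xc - xc = a • (xs - xc) := by
      have hb' : b = 1 - a := by linarith
      rw [hb']; module
    rw [hx', norm_smul, ← norm_neg (xs - xc)]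
    have : -(xs - xc) = e := by simp [he]
    rw [this]
    have : ‖a‖ ≤ 1 := by rw [Real.norm_eq_abs, abs_of_nonneg ha]; linarith
    nlinarith [norm_nonneg e]
  have hT0 := (convex_segment xs xc).norm_image_sub_le_of_norm_hasFDerivWithin_le
    key hbound (left_mem_segment ℝ xs xc) (right_mem_segment ℝ xs xc)
  have hT : ‖F xc - (F' xc) e‖ ≤ γ * ‖e‖ ^ 2 := by
    have h1 : F xc - F' xc xc - (F xs - F' xc xs) = F xc - (F' xc) e := by
      rw [hroot, he, map_sub]; abel
    rw [h1] at hT0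
    calc ‖F xc - (F' xc) e‖ ≤ γ * ‖e‖ * ‖xc - xs‖ := hT0
      _ = γ * ‖e‖ ^ 2 := by rw [← he]; ring
  -- bound on ‖F xc‖
  have hFc : ‖F xc‖ ≤ 2 * γ * ‖e‖ ^ 2 + ‖F' xs‖ * ‖e‖ := by
    have h2 : ‖F' xc‖ ≤ ‖F' xs‖ + γ * ‖e‖ := by
      have := hlip xc hxc xs hxs
      calc ‖F' xc‖ = ‖F' xs + (F' xc - F' xs)‖ := by rw [add_sub_cancel]
        _ ≤ ‖F' xs‖ + ‖F' xc - F' xs‖ := norm_add_le _ _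
        _ ≤ ‖F' xs‖ + γ * ‖e‖ := by rw [← he] at this; linarith
    calc ‖F xc‖ = ‖(F xc - (F' xc) e) + (F' xc) e‖ := by rw [sub_add_cancel]
      _ ≤ ‖F xc - (F' xc) e‖ + ‖(F' xc) e‖ := norm_add_le _ _
      _ ≤ γ * ‖e‖ ^ 2 + ‖F' xc‖ * ‖e‖ := by
          gcongr
          exact (F' xc).le_opNorm e
      _ ≤ 2 * γ * ‖e‖ ^ 2 + ‖F' xs‖ * ‖e‖ := by nlinarith
  -- degenerate case
  rcases eq_or_lt_of_le (norm_nonneg A') with hA0 | hApos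
  · have hA' : A' = 0 := by rwa [eq_comm, norm_eq_zero] at hA0
    have : (xc + s) - xs = 0 := by
      have := hid (e + s)
      rw [hA'] at this
      simp at this
      have h3 : (xc + s) - xs = e + s := by rw [he]; abel
      rw [h3, ← this]
    rw [this, norm_zero]
    positivity
  -- main case
  have hdecomp : (F' xs) (e + s) =
      (F' xs - F' xc) (e + s) + ((F' xc) e - F xc) + ((F' xc) s + F xc) := by
    simp only [ContinuousLinearMap.sub_apply, map_add]
    abel
  have hlipc : ‖F' xs - F' xc‖ ≤ γ * ‖e‖ := by
    have := hlip xs hxs xc hxc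
    rw [← norm_neg (xs - xc)] at this
    have h4 : -(xs - xc) = e := by simp [he]
    rwa [h4] at this
  have hmain : ‖e + s‖ ≤ ‖A'‖ * (γ * ‖e‖ * ‖e + s‖ + γ * ‖e‖ ^ 2 + η * ‖F xc‖) := by
    calc ‖e + s‖ = ‖A' ((F' xs) (e + s))‖ := by rw [hid]
      _ ≤ ‖A'‖ * ‖(F' xs) (e + s)‖ := A'.le_opNorm _
      _ ≤ ‖A'‖ * (γ * ‖e‖ * ‖e + s‖ + γ * ‖e‖ ^ 2 + η * ‖F xc‖) := by
          refine mul_le_mul_of_nonneg_left ?_ (norm_nonneg _)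
          rw [hdecomp]
          calc ‖(F' xs - F' xc) (e + s) + ((F' xc) e - F xc) + ((F' xc) s + F xc)‖
              ≤ ‖(F' xs - F' xc) (e + s)‖ + ‖(F' xc) e - F xc‖ + ‖(F' xc) s + F xc‖ :=
                norm_add₃_le
            _ ≤ γ * ‖e‖ * ‖e + s‖ + γ * ‖e‖ ^ 2 + η * ‖F xc‖ :=
                add_le_add (add_le_add
                  (((F' xs - F' xc).le_opNorm _).trans
                    (mul_le_mul_of_nonneg_right hlipc (norm_nonneg _)))
                  (by rw [norm_sub_rev]; exact hT)) hres
  have hgan : 2 * γ * ‖A'‖ * ‖e‖ ≤ 1 := by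
    rw [le_div_iff₀ (by positivity)] at hsmall
    linarith
  have hfin : (xc + s) - xs = e + s := by rw [he]; abel
  rw [hfin]
  have t0 : (0:ℝ) ≤ 1 - 2 * γ * ‖A'‖ * ‖e‖ := by linarith
  have t1 : 0 ≤ (1 - 2 * γ * ‖A'‖ * ‖e‖) * ‖e + s‖ :=
    mul_nonneg t0 (norm_nonneg _)
  have t2 : 0 ≤ (1 - 2 * γ * ‖A'‖ * ‖e‖) * (η * ‖e‖) :=
    mul_nonneg t0 (mul_nonneg hη hn)
  have t3 : ‖A'‖ * η * ‖F xc‖ ≤ ‖A'‖ * η * (2 * γ * ‖e‖ ^ 2 + ‖F' xs‖ * ‖e‖) :=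
    mul_le_mul_of_nonneg_left hFc (mul_nonneg (norm_nonneg _) hη)
  have H : ‖e + s‖ ≤ 2 * (γ * ‖A'‖ * ‖e‖ ^ 2) + 2 * (‖A'‖ * ‖F' xs‖) * (η * ‖e‖)
      + 2 * (η * ‖e‖) := by linarith [t1, t2, t3, hmain]
  have q1 : (0:ℝ) ≤ γ * ‖A'‖ * η * ‖e‖ :=
    mul_nonneg (mul_nonneg (mul_nonneg hγ.le (norm_nonneg A')) hη) hn
  have q2 : (0:ℝ) ≤ ‖A'‖ * ‖F' xs‖ * ‖e‖ ^ 2 :=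
    mul_nonneg (mul_nonneg (norm_nonneg A') (norm_nonneg (F' xs))) (by positivity)
  have q3 : (0:ℝ) ≤ ‖e‖ ^ 2 := by positivity
  nlinarith [H, q1, q2, q3]
end

section
/- Let F: Ω → ℝ^N satisfy the standard assumptions, and suppose at each iterate x_k (with ‖x_k − x*‖ ≤ ρ small enough) the step s_k satisfies ‖F'(x_k)s_k + F(x_k)‖ ≤ η‖F(x_k)‖ with a fixed η such that Kρ + Kη < 1, where K is the local improvement constant. Then the iterates x_{k+1} = x_k + s_k remain in the ball of radius ρ and converge q-linearly to x* with q-factor at most Kρ + Kη. -/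
theorem stmt18 {N : ℕ} (F : En N → En N) (F' : En N → (En N →L[ℝ] En N))
    (xs : En N) (x s : ℕ → En N) (ρ η K : ℝ)
    (hρ : 0 < ρ) (hη : 0 ≤ η) (hK : 0 < K)
    (hroot : F xs = 0)
    (hloc : ∀ xc ∈ Metric.closedBall xs ρ, ∀ t : En N,
      ‖F' xc t + F xc‖ ≤ η * ‖F xc‖ →
      ‖(xc + t) - xs‖ ≤ K * (‖xc - xs‖ ^ 2 + η * ‖xc - xs‖))
    (hcontr : K * ρ + K * η < 1)
    (hx0 : x 0 ∈ Metric.closedBall xs ρ)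
    (hiter : ∀ k, x (k + 1) = x k + s k)
    (hforce : ∀ k, ‖F' (x k) (s k) + F (x k)‖ ≤ η * ‖F (x k)‖) :
    (∀ k, x k ∈ Metric.closedBall xs ρ) ∧
    (∀ k, ‖x (k + 1) - xs‖ ≤ (K * ρ + K * η) * ‖x k - xs‖) ∧
    Filter.Tendsto x Filter.atTop (nhds xs) := by
  set q := K * ρ + K * η with hq
  have hq0 : 0 ≤ q := by positivity
  have step : ∀ k, x k ∈ Metric.closedBall xs ρ →
      ‖x (k + 1) - xs‖ ≤ q * ‖x k - xs‖ := by
    intro k hk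
    have hball := hk
    rw [Metric.mem_closedBall, dist_eq_norm] at hball
    have h := hloc (x k) hk (s k) (hforce k)
    rw [← hiter k] at h
    have hnn : 0 ≤ ‖x k - xs‖ := norm_nonneg _
    calc ‖x (k + 1) - xs‖ ≤ K * (‖x k - xs‖ ^ 2 + η * ‖x k - xs‖) := h
      _ = (K * ‖x k - xs‖ + K * η) * ‖x k - xs‖ := by ring
      _ ≤ q * ‖x k - xs‖ := by
          apply mul_le_mul_of_nonneg_right _ hnn
          have : K * ‖x k - xs‖ ≤ K * ρ := by
            exact mul_le_mul_of_nonneg_left hball hK.le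
          linarith
  have hball : ∀ k, x k ∈ Metric.closedBall xs ρ := by
    intro k
    induction k with
    | zero => exact hx0
    | succ n ih =>
      have h := step n ih
      rw [Metric.mem_closedBall, dist_eq_norm]
      have hb := ih
      rw [Metric.mem_closedBall, dist_eq_norm] at hb
      calc ‖x (n + 1) - xs‖ ≤ q * ‖x n - xs‖ := h
        _ ≤ 1 * ρ := by
            apply mul_le_mul hcontr.le hb (norm_nonneg _) zero_le_one
        _ = ρ := one_mul ρ
  refine ⟨hball, fun k => step k (hball k), ?_⟩
  have hgeo : ∀ k, ‖x k - xs‖ ≤ q ^ k * ρ := by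
    intro k
    induction k with
    | zero =>
      have hb := hx0; rw [Metric.mem_closedBall, dist_eq_norm] at hb
      simpa using hb
    | succ n ih =>
      calc ‖x (n + 1) - xs‖ ≤ q * ‖x n - xs‖ := step n (hball n)
        _ ≤ q * (q ^ n * ρ) := mul_le_mul_of_nonneg_left ih hq0
        _ = q ^ (n + 1) * ρ := by ring
  have hgt : Filter.Tendsto (fun k => q ^ k * ρ) Filter.atTop (nhds 0) := by
    have := tendsto_pow_atTop_nhds_zero_of_lt_one hq0 hcontr
    simpa using this.mul_const ρ
  have : Filter.Tendsto (fun k => ‖x k - xs‖) Filter.atTop (nhds 0) := by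
    apply squeeze_zero (fun k => norm_nonneg _) hgeo hgt
  have := tendsto_sub_nhds_zero_iff.mp (tendsto_zero_iff_norm_tendsto_zero.mpr this)
  simpa using this
end
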